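/- (Normal equation for the batched least-squares editing objective.) Let K₀ ∈ ℝ^{n×a}, V₀ ∈ ℝ^{m×a}, K₁ ∈ ℝ^{n×b}, V₁ ∈ ℝ^{m×b}, and suppose W K₀ = V₀ and K₀K₀ᵀ + K₁K₁ᵀ is invertible. Then W̃ = (V₁ - W K₁) K₁ᵀ (K₀K₀ᵀ + K₁K₁ᵀ)⁻¹ + W minimizes over Ŵ the objective ‖Ŵ K₀ - V₀‖_F² + ‖Ŵ K₁ - V₁‖_F². -/
import Mathlib


open Matrix

/-- Squared Frobenius norm of a real matrix. -/
def frobSq {m n : ℕ} (M : Matrix (Fin m) (Fin n) ℝ) : ℝ :=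
  ∑ i : Fin m, ∑ j : Fin n, (M i j) ^ 2

/-- Frobenius inner product. -/
def ipF {m n : ℕ} (X Y : Matrix (Fin m) (Fin n) ℝ) : ℝ :=
  ∑ i : Fin m, ∑ j : Fin n, X i j * Y i j

lemma frobSq_nonneg {m n : ℕ} (M : Matrix (Fin m) (Fin n) ℝ) : 0 ≤ frobSq M := by
  unfold frobSq; positivity

lemma frobSq_add {m n : ℕ} (X Y : Matrix (Fin m) (Fin n) ℝ) :
    frobSq (X + Y) = frobSq X + 2 * ipF X Y + frobSq Y := by
  have h : ∀ i j, (X i j + Y i j) ^ 2 = X i j ^ 2 + 2 * (X i j * Y i j) + Y i j ^ 2 := by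
    intros; ring
  simp only [frobSq, ipF, Matrix.add_apply, h, Finset.sum_add_distrib, Finset.mul_sum]

lemma ipF_mul_right {m n k : ℕ} (D : Matrix (Fin m) (Fin n) ℝ)
    (K : Matrix (Fin n) (Fin k) ℝ) (M : Matrix (Fin m) (Fin k) ℝ) :
    ipF (D * K) M = ipF D (M * Kᵀ) := by
  simp only [ipF, Matrix.mul_apply, Matrix.transpose_apply, Finset.sum_mul, Finset.mul_sum]
  refine Finset.sum_congr rfl fun i _ => ?_
  rw [Finset.sum_comm]
  exact Finset.sum_congr rfl fun p _ => Finset.sum_congr rfl fun q _ => by ring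

lemma ipF_add_right {m n : ℕ} (D X Y : Matrix (Fin m) (Fin n) ℝ) :
    ipF D (X + Y) = ipF D X + ipF D Y := by
  simp only [ipF, Matrix.add_apply, mul_add, Finset.sum_add_distrib]

lemma ipF_zero_right {m n : ℕ} (D : Matrix (Fin m) (Fin n) ℝ) : ipF D 0 = 0 := by
  simp [ipF]

/-- normal equation for batched least-squares editing: if `W K₀ = V₀` and
`K₀K₀ᵀ + K₁K₁ᵀ` is invertible, then `W̃ = (V₁ - W K₁) K₁ᵀ (K₀K₀ᵀ + K₁K₁ᵀ)⁻¹ + W`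
minimizes `‖Ŵ K₀ - V₀‖_F² + ‖Ŵ K₁ - V₁‖_F²` over all `Ŵ`. -/
theorem stmt_13 {m n a b : ℕ}
    (W : Matrix (Fin m) (Fin n) ℝ)
    (K0 : Matrix (Fin n) (Fin a) ℝ) (V0 : Matrix (Fin m) (Fin a) ℝ)
    (K1 : Matrix (Fin n) (Fin b) ℝ) (V1 : Matrix (Fin m) (Fin b) ℝ)
    (hW : W * K0 = V0) (hinv : IsUnit (K0 * K0ᵀ + K1 * K1ᵀ)) :
    ∀ What : Matrix (Fin m) (Fin n) ℝ,
      frobSq (((V1 - W * K1) * K1ᵀ * (K0 * K0ᵀ + K1 * K1ᵀ)⁻¹ + W) * K0 - V0) +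
          frobSq (((V1 - W * K1) * K1ᵀ * (K0 * K0ᵀ + K1 * K1ᵀ)⁻¹ + W) * K1 - V1) ≤
        frobSq (What * K0 - V0) + frobSq (What * K1 - V1) := by
  intro What
  set A : Matrix (Fin n) (Fin n) ℝ := K0 * K0ᵀ + K1 * K1ᵀ with hA
  set Wt : Matrix (Fin m) (Fin n) ℝ := (V1 - W * K1) * K1ᵀ * A⁻¹ + W with hWt
  have hAinv : A⁻¹ * A = 1 :=
    Matrix.nonsing_inv_mul A ((Matrix.isUnit_iff_isUnit_det A).mp hinv)
  have hWtA : Wt * A = V0 * K0ᵀ + V1 * K1ᵀ := by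
    have h1 : Wt * A = (V1 - W * K1) * K1ᵀ + W * A := by
      rw [hWt, Matrix.add_mul, Matrix.mul_assoc, hAinv, Matrix.mul_one]
    rw [h1, hA, Matrix.mul_add, ← Matrix.mul_assoc, ← Matrix.mul_assoc, hW,
      Matrix.sub_mul]
    abel
  have hnorm : (Wt * K0 - V0) * K0ᵀ + (Wt * K1 - V1) * K1ᵀ = 0 := by
    rw [Matrix.sub_mul, Matrix.sub_mul]
    have : Wt * K0 * K0ᵀ + Wt * K1 * K1ᵀ = V0 * K0ᵀ + V1 * K1ᵀ := by
      rw [Matrix.mul_assoc, Matrix.mul_assoc, ← Matrix.mul_add, ← hA, hWtA]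
    rw [sub_add_sub_comm, this, sub_self]
  have e0 : What * K0 - V0 = (What - Wt) * K0 + (Wt * K0 - V0) := by
    rw [Matrix.sub_mul]; abel
  have e1 : What * K1 - V1 = (What - Wt) * K1 + (Wt * K1 - V1) := by
    rw [Matrix.sub_mul]; abel
  have hcross : ipF ((What - Wt) * K0) (Wt * K0 - V0)
      + ipF ((What - Wt) * K1) (Wt * K1 - V1) = 0 := by
    rw [ipF_mul_right, ipF_mul_right, ← ipF_add_right, hnorm, ipF_zero_right]
  have h0 := frobSq_nonneg ((What - Wt) * K0)
  have h1 := frobSq_nonneg ((What - Wt) * K1)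
  rw [e0, e1, frobSq_add, frobSq_add]
  linarith
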